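/- arXiv:2407.10786 — 5 statements merged into one kernel-verified Lean document; each statement's English description precedes it below -/
import Mathlib

section
/- Let A, B ∈ GL_n(ℂ), let f and g be complete flags in ℂ^n invariant under A and B respectively, and suppose f and g are transverse (i.e. dim(f_i ∩ g_j) = max(0, i+j-n) for all i,j). Let M be an invertible matrix whose k-th column spans the one-dimensional space f_{n+1-k} ∩ g_k. Then M⁻¹AM is lower triangular and M⁻¹BM is upper triangular. -/
/-! Since `M` is invertible its columns are independent. The columns `k ≥ j` lie in `f (n - j)`,
which has dimension `n - j`, so they span it; `A` preserves `f (n - j)`, hence `A` maps column `j`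
into the span of the columns `k ≥ j`, i.e. column `j` of `M⁻¹ * A * M` vanishes above the
diagonal. Dually, the columns `k ≤ j` span `g (j + 1)`, which `B` preserves. -/

namespace Matrix

variable {K ι : Type*} [Field K] [Fintype ι] [DecidableEq ι]

theorem inv_mulVec_apply_eq_zero_of_mem_span_col {M : Matrix ι ι K} (hM : IsUnit M.det)
    {s : Set ι} {x : ι → K} (hx : x ∈ Submodule.span K (M.col '' s)) {i : ι} (hi : i ∉ s) :
    (M⁻¹ *ᵥ x) i = 0 := by
  suffices Submodule.span K (M.col '' s) ≤
      LinearMap.ker ((LinearMap.proj i).comp M⁻¹.mulVecLin) from this hx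
  rw [Submodule.span_le]
  rintro _ ⟨k, hk, rfl⟩
  have hik : i ≠ k := ne_of_mem_of_not_mem hk hi |>.symm
  have hentry : (M⁻¹ *ᵥ M.col k) i = (M⁻¹ * M) i k := by
    simp only [mulVec, dotProduct, mul_apply, col_apply]
  simp [hentry, nonsing_inv_mul M hM, one_apply_ne hik]

theorem span_col_eq_of_finrank_le {M : Matrix ι ι K} (hM : IsUnit M.det)
    {W : Submodule K (ι → K)} {s : Finset ι} (hW : Module.finrank K W ≤ s.card)
    (hcol : ∀ k ∈ s, M.col k ∈ W) :
    Submodule.span K (M.col '' s) = W := by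
  have hli : LinearIndependent K (fun k : (s : Set ι) => M.col k) :=
    (linearIndependent_cols_of_det_ne_zero hM.ne_zero).comp _ Subtype.val_injective
  refine Submodule.eq_of_le_of_finrank_le ?_ ?_
  · rw [Submodule.span_le]
    rintro _ ⟨k, hk, rfl⟩
    exact hcol k hk
  · rw [Set.image_eq_range, finrank_span_eq_card hli]
    simpa using hW

theorem inv_mul_mul_apply_eq_zero_of_mulVec_col_mem {A M : Matrix ι ι K} (hM : IsUnit M.det)
    {W : Submodule K (ι → K)} {s : Finset ι} (hW : Module.finrank K W ≤ s.card)
    (hcol : ∀ k ∈ s, M.col k ∈ W) {i j : ι} (hAj : A *ᵥ M.col j ∈ W) (hi : i ∉ s) :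
    (M⁻¹ * A * M) i j = 0 := by
  have hentry : (M⁻¹ * A * M) i j = (M⁻¹ *ᵥ (A *ᵥ M.col j)) i := by
    rw [mulVec_mulVec]
    simp only [mulVec, dotProduct, mul_apply, col_apply]
  rw [← span_col_eq_of_finrank_le hM hW hcol] at hAj
  exact hentry ▸ inv_mulVec_apply_eq_zero_of_mem_span_col hM hAj (by simpa using hi)

end Matrix

open Matrix

theorem stmt0_general {n : ℕ}
    (A B M : Matrix (Fin n) (Fin n) ℂ)
    (hM : IsUnit M.det)
    (f g : ℕ → Submodule ℂ (Fin n → ℂ))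
    (hf_dim : ∀ i ≤ n, Module.finrank ℂ (f i) = i)
    (hg_dim : ∀ i ≤ n, Module.finrank ℂ (g i) = i)
    (hf_mono : ∀ i j, i ≤ j → f i ≤ f j)
    (hg_mono : ∀ i j, i ≤ j → g i ≤ g j)
    (hf_inv : ∀ i ≤ n, (f i).map A.mulVecLin ≤ f i)
    (hg_inv : ∀ i ≤ n, (g i).map B.mulVecLin ≤ g i)
    (hcol : ∀ k : Fin n,
      Submodule.span ℂ {(fun i => M i k : Fin n → ℂ)} = f (n - (k : ℕ)) ⊓ g ((k : ℕ) + 1)) :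
    (∀ i j : Fin n, i < j → (M⁻¹ * A * M) i j = 0) ∧
    (∀ i j : Fin n, j < i → (M⁻¹ * B * M) i j = 0) := by
  have hcol_mem (k : Fin n) : M.col k ∈ f (n - k) ⊓ g (k + 1) :=
    hcol k ▸ Submodule.mem_span_singleton_self _
  constructor
  · intro i j hij
    refine inv_mul_mul_apply_eq_zero_of_mulVec_col_mem hM (s := Finset.Ici j)
      (by simp [hf_dim _ (n.sub_le j)]) (fun k hk => ?_)
      (hf_inv _ (n.sub_le j) (Submodule.mem_map_of_mem (hcol_mem j).1)) (by simpa using hij)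
    have hjk : (j : ℕ) ≤ k := Fin.le_def.mp (Finset.mem_Ici.mp hk)
    exact hf_mono _ _ (Nat.sub_le_sub_left hjk n) (hcol_mem k).1
  · intro i j hji
    refine inv_mul_mul_apply_eq_zero_of_mulVec_col_mem hM (s := Finset.Iic j)
      (by simp [hg_dim _ j.isLt]) (fun k hk => ?_)
      (hg_inv _ j.isLt (Submodule.mem_map_of_mem (hcol_mem j).2)) (by simpa using hji)
    have hkj : (k : ℕ) ≤ j := Fin.le_def.mp (Finset.mem_Iic.mp hk)
    exact hg_mono _ _ (Nat.succ_le_succ hkj) (hcol_mem k).2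

/-- If `f` and `g` are complete flags invariant under `A` and `B`
respectively, which are transverse, and the `k`-th column of the invertible matrix `M`
spans `f (n+1-k) ⊓ g k` (1-based indexing, so the flags are indexed by `0, ..., n` with
`finrank (f i) = i`), then `M⁻¹ * A * M` is lower triangular and `M⁻¹ * B * M` is
upper triangular. -/
theorem stmt0 {n : ℕ} (hn : 0 < n)
    (A B M : Matrix (Fin n) (Fin n) ℂ)
    (hA : IsUnit A.det) (hB : IsUnit B.det) (hM : IsUnit M.det)
    (f g : ℕ → Submodule ℂ (Fin n → ℂ))
    (hf_dim : ∀ i ≤ n, Module.finrank ℂ (f i) = i)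
    (hg_dim : ∀ i ≤ n, Module.finrank ℂ (g i) = i)
    (hf_mono : ∀ i j, i ≤ j → f i ≤ f j)
    (hg_mono : ∀ i j, i ≤ j → g i ≤ g j)
    (hf_inv : ∀ i ≤ n, (f i).map A.mulVecLin ≤ f i)
    (hg_inv : ∀ i ≤ n, (g i).map B.mulVecLin ≤ g i)
    (htrans : ∀ i j, 1 ≤ i → i ≤ n → 1 ≤ j → j ≤ n →
      Module.finrank ℂ ((f i ⊓ g j : Submodule ℂ (Fin n → ℂ)) : Submodule ℂ (Fin n → ℂ)) = i + j - n)
    (hcol : ∀ k : Fin n,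
      Submodule.span ℂ {(fun i => M i k : Fin n → ℂ)} = f (n - (k : ℕ)) ⊓ g ((k : ℕ) + 1)) :
    (∀ i j : Fin n, i < j → (M⁻¹ * A * M) i j = 0) ∧
    (∀ i j : Fin n, j < i → (M⁻¹ * B * M) i j = 0) :=
  stmt0_general A B M hM f g hf_dim hg_dim hf_mono hg_mono hf_inv hg_inv hcol
end

section
/- Given nonzero complex numbers α₁, α₂, β₁, β₂, γ₁, γ₂ with γ₁γ₂ = (β₁β₂)/(α₁α₂), the matrices A = [[α₁, 0], [α₁ - β₁/γ₁, α₂]] and B = [[β₁, β₂ - α₂γ₁], [0, β₂]] satisfy: A has eigenvalues α₁, α₂; B has eigenvalues β₁, β₂; and BA⁻¹ has eigenvalues γ₁, γ₂. -/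
open Polynomial

namespace Matrix

theorem charpoly_roots_eq_pair_of_trace_of_det {R : Type*} [CommRing R] [IsDomain R]
    {M : Matrix (Fin 2) (Fin 2) R} {a b : R} (htrace : M.trace = a + b) (hdet : M.det = a * b) :
    M.charpoly.roots = {a, b} := by
  have hcharpoly : M.charpoly = C 1 * X ^ 2 + C (-(a + b)) * X + C (a * b) := by
    rw [charpoly_fin_two, htrace, hdet]
    simp only [map_one, one_mul, map_neg]
    ring
  rw [hcharpoly, roots_quadratic_eq_pair_iff_of_ne_zero one_ne_zero]
  exact ⟨by ring, by ring⟩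

variable {K : Type*} [Field K]

theorem trace_mul_inv_fin_two (A B : Matrix (Fin 2) (Fin 2) K) :
    (B * A⁻¹).trace = (B 0 0 * A 1 1 - B 0 1 * A 1 0 - B 1 0 * A 0 1 + B 1 1 * A 0 0) / A.det := by
  rw [inv_def, adjugate_fin_two, Ring.inverse_eq_inv', trace_fin_two]
  simp only [smul_of, smul_cons, smul_eq_mul, mul_neg, smul_empty, mul_apply, of_apply,
    cons_val', cons_val_zero, cons_val_one, cons_val_fin_one, Fin.sum_univ_two]
  ring

theorem det_mul_inv (A B : Matrix (Fin 2) (Fin 2) K) : (B * A⁻¹).det = B.det / A.det := by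
  rw [det_mul, det_nonsing_inv, Ring.inverse_eq_inv', div_eq_mul_inv]

end Matrix

theorem stmt6_general (α₁ α₂ β₁ β₂ γ₁ γ₂ : ℂ)
    (hα₁ : α₁ ≠ 0) (hα₂ : α₂ ≠ 0)
    (hγ₁ : γ₁ ≠ 0)
    (hdet : γ₁ * γ₂ = β₁ * β₂ / (α₁ * α₂))
    (A B : Matrix (Fin 2) (Fin 2) ℂ)
    (hA : A = !![α₁, 0; α₁ - β₁ / γ₁, α₂])
    (hB : B = !![β₁, β₂ - α₂ * γ₁; 0, β₂]) :
    A.charpoly.roots = {α₁, α₂} ∧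
    B.charpoly.roots = {β₁, β₂} ∧
    (B * A⁻¹).charpoly.roots = {γ₁, γ₂} := by
  have hdetA : A.det = α₁ * α₂ := by simp [hA, Matrix.det_fin_two]
  have hdetB : B.det = β₁ * β₂ := by simp [hB, Matrix.det_fin_two]
  refine ⟨Matrix.charpoly_roots_eq_pair_of_trace_of_det (by simp [hA]) hdetA,
    Matrix.charpoly_roots_eq_pair_of_trace_of_det (by simp [hB]) hdetB,
    Matrix.charpoly_roots_eq_pair_of_trace_of_det ?_ ?_⟩
  · -- the trace works out to `γ₁ + β₁β₂/(α₁α₂γ₁)`, and `hdet` turns the second summand into `γ₂`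
    rw [Matrix.trace_mul_inv_fin_two, hdetA, ← mul_right_inj' hγ₁, mul_add, hdet]
    subst hA hB
    simp only [Matrix.of_apply, Matrix.cons_val', Matrix.cons_val_zero, Matrix.cons_val_one,
      Matrix.cons_val_fin_one, mul_zero, sub_zero]
    field_simp
    ring
  · rw [Matrix.det_mul_inv, hdetA, hdetB, hdet]

/-- the explicit `n = 2` solution. With `γ₁γ₂ = β₁β₂/(α₁α₂)`, the
matrices `A = [[α₁,0],[α₁ - β₁/γ₁, α₂]]` and `B = [[β₁, β₂ - α₂γ₁],[0, β₂]]` have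
eigenvalue multisets `{α₁, α₂}`, `{β₁, β₂}`, and `B * A⁻¹` has eigenvalues
`{γ₁, γ₂}`. -/
theorem stmt6 (α₁ α₂ β₁ β₂ γ₁ γ₂ : ℂ)
    (hα₁ : α₁ ≠ 0) (hα₂ : α₂ ≠ 0) (hβ₁ : β₁ ≠ 0) (hβ₂ : β₂ ≠ 0)
    (hγ₁ : γ₁ ≠ 0) (hγ₂ : γ₂ ≠ 0)
    (hdet : γ₁ * γ₂ = β₁ * β₂ / (α₁ * α₂))
    (A B : Matrix (Fin 2) (Fin 2) ℂ)
    (hA : A = !![α₁, 0; α₁ - β₁ / γ₁, α₂])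
    (hB : B = !![β₁, β₂ - α₂ * γ₁; 0, β₂]) :
    A.charpoly.roots = {α₁, α₂} ∧
    B.charpoly.roots = {β₁, β₂} ∧
    (B * A⁻¹).charpoly.roots = {γ₁, γ₂} :=
  stmt6_general α₁ α₂ β₁ β₂ γ₁ γ₂ hα₁ hα₂ hγ₁ hdet A B hA hB
end

section
/- Let n ≥ 2 and let M be an n×n array of unknowns X_{i,j} ∈ ℂ* (0 ≤ i,j ≤ n-1). Suppose one prescribes: all row products, all column products, all n cyclic 'large antidiagonal' products (products of X_{i,j} over i+j ≡ c mod n for each c), and the product ∏_{i+j<n-1} X_{i,j}, subject to the compatibility conditions that the product of all prescribed row products equals the product of all prescribed column products equals the product of all prescribed antidiagonal products. Then the entries of M are uniquely determined by the top-left (n-2)×(n-1) block of entries together with the prescribed products. In particular the solution set is parameterized by (ℂ*)^{(n-1)(n-2)}. -/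
/-!
The rows above the last two are determined entry by entry: each misses only its last entry,
which its row product fixes. Every column and every antidiagonal then meets the two bottom
rows `p = n - 2` and `q = n - 1` in one entry each, so the column products fix
`X p j * X q j` and the antidiagonal products fix `X p (j + 1) * X q j`. The midline product
contains `X p 0` as its only unknown entry, and from there these two families of relations
determine the two bottom rows alternately, sweeping from left to right.
-/

open Finset

theorem Finset.eq_of_prod_eq_of_eqOn_erase {ι M : Type*} [CommMonoidWithZero M]
    [IsCancelMulZero M] [Nontrivial M] [DecidableEq ι] {s : Finset ι} {a : ι} (ha : a ∈ s)
    {f g : ι → M}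
    (h : ∏ i ∈ s, f i = ∏ i ∈ s, g i) (hfg : ∀ i ∈ s.erase a, f i = g i)
    (hg : ∀ i ∈ s.erase a, g i ≠ 0) : f a = g a := by
  rw [← mul_prod_erase s f ha, ← mul_prod_erase s g ha, prod_congr rfl hfg] at h
  exact mul_right_cancel₀ (prod_ne_zero_iff.mpr hg) h

namespace Fin

variable {M : Type*} {k : ℕ}

section

variable [CommMonoidWithZero M] [IsCancelMulZero M] [Nontrivial M]

theorem eq_of_prod_eq_of_forall_castSucc {f g : Fin (k + 1) → M}
    (h : ∏ i, f i = ∏ i, g i) (hfg : ∀ i : Fin k, f i.castSucc = g i.castSucc)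
    (hg : ∀ i, g i ≠ 0) : f = g := by
  funext i
  induction i using Fin.lastCases with
  | last =>
    rw [prod_univ_castSucc, prod_univ_castSucc, prod_congr rfl fun i _ => hfg i] at h
    exact mul_left_cancel₀ (prod_ne_zero_iff.mpr fun i _ => hg _) h
  | cast i => exact hfg i

theorem mul_eq_mul_of_prod_eq_of_forall_castSucc_castSucc {f g : Fin (k + 2) → M}
    (h : ∏ i, f i = ∏ i, g i)
    (hfg : ∀ i : Fin k, f i.castSucc.castSucc = g i.castSucc.castSucc)
    (hg : ∀ i, g i ≠ 0) :
    f (last k).castSucc * f (last (k + 1)) = g (last k).castSucc * g (last (k + 1)) := by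
  simp only [prod_univ_castSucc, mul_assoc, hfg] at h
  exact mul_left_cancel₀ (prod_ne_zero_iff.mpr fun i _ => hg _) h

end

theorem eq_and_eq_of_mul_eq_of_mul_succ_eq [MonoidWithZero M] [IsCancelMulZero M]
    {a b a' b' : Fin (k + 1) → M}
    (ha' : ∀ j, a' j ≠ 0) (hb' : ∀ j, b' j ≠ 0) (h₀ : a 0 = a' 0)
    (hcol : ∀ j, a j * b j = a' j * b' j)
    (hdiag : ∀ j : Fin k, a j.succ * b j.castSucc = a' j.succ * b' j.castSucc) :
    a = a' ∧ b = b' := by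
  have hb : ∀ j, a j = a' j → b j = b' j := fun j hj =>
    mul_left_cancel₀ (ha' j) (hj ▸ hcol j)
  have ha : ∀ j, a j = a' j := fun j => by
    induction j using Fin.induction with
    | zero => exact h₀
    | succ j ih =>
      exact mul_right_cancel₀ (hb' j.castSucc) (by simpa only [hb _ ih] using hdiag j)
  exact ⟨funext ha, funext fun j => hb j (ha j)⟩

theorem succ_add_castSucc_last_sub_last (j : Fin (k + 1)) :
    j.succ + (last k).castSucc - last (k + 1) = j.castSucc := by
  rw [← succ_last, ← coeSucc_eq_succ (a := last k), ← coeSucc_eq_succ (a := j)]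
  abel

end Fin

theorem castSucc_last_zero_eq_of_prod_upperLeft_eq {M : Type*} [CommMonoidWithZero M]
    [IsCancelMulZero M] [Nontrivial M] {k : ℕ} {X Y : Fin (k + 2) → Fin (k + 2) → M}
    (hY0 : ∀ i j, Y i j ≠ 0) (htop : ∀ i : Fin (k + 2), (i : ℕ) < k → X i = Y i)
    (h : ∏ p ∈ univ.filter (fun p : Fin (k + 2) × Fin (k + 2) => (p.1 : ℕ) + p.2 < k + 1),
        X p.1 p.2 =
      ∏ p ∈ univ.filter (fun p : Fin (k + 2) × Fin (k + 2) => (p.1 : ℕ) + p.2 < k + 1),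
        Y p.1 p.2) :
    X (Fin.last k).castSucc 0 = Y (Fin.last k).castSucc 0 := by
  refine eq_of_prod_eq_of_eqOn_erase (f := fun p : Fin (k + 2) × Fin (k + 2) => X p.1 p.2)
    (g := fun p => Y p.1 p.2) (a := ((Fin.last k).castSucc, 0))
    (by simp) h (fun p hp => ?_) (fun p _ => hY0 p.1 p.2)
  simp only [mem_erase, mem_filter, mem_univ, true_and, ne_eq, Prod.ext_iff,
    Fin.ext_iff, Fin.val_castSucc, Fin.val_last, Fin.val_zero] at hp
  exact congrFun (htop p.1 (by omega)) p.2

open Fin in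
theorem stmt8_general {n : ℕ} (hn : 2 ≤ n) (r c d : Fin n → ℂ) (m : ℂ)
    (X Y : Fin n → Fin n → ℂ)
    (hY0 : ∀ i j, Y i j ≠ 0)
    (hXr : ∀ i, ∏ j, X i j = r i) (hYr : ∀ i, ∏ j, Y i j = r i)
    (hXc : ∀ j, ∏ i, X i j = c j) (hYc : ∀ j, ∏ i, Y i j = c j)
    (hXd : ∀ a : Fin n, ∏ i, X i (a - i) = d a)
    (hYd : ∀ a : Fin n, ∏ i, Y i (a - i) = d a)
    (hXm : ∏ p ∈ univ.filter (fun p : Fin n × Fin n => (p.1 : ℕ) + (p.2 : ℕ) < n - 1),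
        X p.1 p.2 = m)
    (hYm : ∏ p ∈ univ.filter (fun p : Fin n × Fin n => (p.1 : ℕ) + (p.2 : ℕ) < n - 1),
        Y p.1 p.2 = m)
    (hblock : ∀ i j : Fin n, (i : ℕ) < n - 2 → (j : ℕ) < n - 1 → X i j = Y i j) :
    X = Y := by
  obtain ⟨k, rfl⟩ : ∃ k, n = k + 2 := ⟨n - 2, by omega⟩
  have htop : ∀ i : Fin (k + 2), (i : ℕ) < k → X i = Y i := fun i hi =>
    eq_of_prod_eq_of_forall_castSucc (by rw [hXr, hYr])
      (fun j => hblock i j.castSucc (by omega) (by simpa using j.is_le)) (hY0 i)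
  have htop' (i : Fin k) (j) : X i.castSucc.castSucc j = Y i.castSucc.castSucc j :=
    congrFun (htop _ (by simp)) j
  have hcol (j) := mul_eq_mul_of_prod_eq_of_forall_castSucc_castSucc
    (f := (X · j)) (g := (Y · j)) (by rw [hXc, hYc]) (htop' · j) (hY0 · j)
  have hdiag (j : Fin (k + 1)) := mul_eq_mul_of_prod_eq_of_forall_castSucc_castSucc
    (f := fun i => X i (j.succ + (last k).castSucc - i))
    (g := fun i => Y i (j.succ + (last k).castSucc - i))
    (by rw [hXd, hYd]) (fun i => htop' i _) (fun i => hY0 i _)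
  simp only [add_sub_cancel_right, succ_add_castSucc_last_sub_last] at hdiag
  have hmid := castSucc_last_zero_eq_of_prod_upperLeft_eq hY0 htop (hXm.trans hYm.symm)
  obtain ⟨hp, hq⟩ := eq_and_eq_of_mul_eq_of_mul_succ_eq (hY0 _) (hY0 _) hmid hcol hdiag
  funext i
  induction i using Fin.lastCases with
  | last => exact hq
  | cast i =>
    induction i using Fin.lastCases with
    | last => exact hp
    | cast i => exact htop _ (by simp)

open Finset in
/-- an `n × n` array of nonzero complex numbers with prescribed row
products, column products, cyclic antidiagonal products (over `i + j ≡ c mod n`),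
and prescribed product over the region `i + j < n - 1` (the midline equation),
subject to the compatibility that the total products of the prescribed row, column
and antidiagonal products agree, is uniquely determined by its top-left
`(n-2) × (n-1)` block of entries.  (Hence the solution set is parameterized by the
`(n-1)(n-2)` free entries of the block.) -/
theorem stmt8 {n : ℕ} (hn : 2 ≤ n) (r c d : Fin n → ℂ) (m : ℂ)
    (hr : ∀ i, r i ≠ 0) (hc : ∀ j, c j ≠ 0) (hd : ∀ a, d a ≠ 0) (hm : m ≠ 0)
    (hcompat₁ : ∏ i, r i = ∏ j, c j)
    (hcompat₂ : ∏ i, r i = ∏ a, d a)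
    (X Y : Fin n → Fin n → ℂ)
    (hX0 : ∀ i j, X i j ≠ 0) (hY0 : ∀ i j, Y i j ≠ 0)
    (hXr : ∀ i, ∏ j, X i j = r i) (hYr : ∀ i, ∏ j, Y i j = r i)
    (hXc : ∀ j, ∏ i, X i j = c j) (hYc : ∀ j, ∏ i, Y i j = c j)
    (hXd : ∀ a : Fin n, ∏ i, X i (a - i) = d a)
    (hYd : ∀ a : Fin n, ∏ i, Y i (a - i) = d a)
    (hXm : ∏ p ∈ univ.filter (fun p : Fin n × Fin n => (p.1 : ℕ) + (p.2 : ℕ) < n - 1),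
        X p.1 p.2 = m)
    (hYm : ∏ p ∈ univ.filter (fun p : Fin n × Fin n => (p.1 : ℕ) + (p.2 : ℕ) < n - 1),
        Y p.1 p.2 = m)
    (hblock : ∀ i j : Fin n, (i : ℕ) < n - 2 → (j : ℕ) < n - 1 → X i j = Y i j) :
    X = Y :=
  stmt8_general hn r c d m X Y hY0 hXr hYr hXc hYc hXd hYd hXm hYm hblock
end

section
/- For every pair of integers (g, k) with g ≥ 0 and 3 ≤ k, satisfying k ≤ 2g + 6 when g ≥ 2, and k ≤ 9 when g = 1, there exists a convex lattice polygon in ℤ² with exactly g interior lattice points and exactly k boundary lattice points. -/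
/-- The canonical embedding of `ℤ²` into `ℝ²`. -/
noncomputable def latticeEmbed (p : ℤ × ℤ) : ℝ × ℝ := ((p.1 : ℝ), (p.2 : ℝ))

/-!
Every polygon used is a truncated triangle: the triangle `(0,0), (N,0), (0,h)` with its corner
at the origin cut off along the line through `(m,0)` and `(0,1)`, i.e. the convex hull of
`(0,1), (0,h), (m,0), (N,0)`. It is the intersection of four closed half-planes with integer
coefficients, and its interior is the intersection of the corresponding open half-planes, so
counting its interior and boundary lattice points is a matter of integer inequalities.

For `g ≥ 1` take `h = 2` and `N = 2g + 2`: the interior lattice points are `(1,1), …, (g,1)`,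
and the boundary ones are the `N - m + 1` points of the bottom edge together with `(0,1)`,
`(0,2)` and the midpoint `(g+1,1)` of the hypotenuse, so `m = 2g + 6 - k` gives `k ≥ 4`
boundary points. The remaining cases are `k = 3` (take `m = N = 2g + 1`, where the hypotenuse
has no midpoint), `g = 0` (take `h = 1`, `m = 0`, `N = k - 2`) and `(g, k) = (1, 9)` (take
`h = N = 3`, `m = 0`).
-/

open Set

theorem ContinuousLinearMap.interior_setOf_le {E : Type*} [NormedAddCommGroup E]
    [NormedSpace ℝ E] [CompleteSpace E] {ℓ : E →L[ℝ] ℝ} (hℓ : ℓ ≠ 0) (c : ℝ) :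
    interior {x | ℓ x ≤ c} = {x | ℓ x < c} := by
  have hsurj : Function.Surjective ℓ :=
    LinearMap.surjective_iff_ne_zero.mpr fun h ↦ hℓ (ContinuousLinearMap.coe_injective h)
  have h := ℓ.interior_preimage hsurj (Iic c)
  rwa [interior_Iic] at h

theorem Convex.mk_mem_of_le_of_le {𝕜 E : Type*} [Field 𝕜] [LinearOrder 𝕜] [IsStrictOrderedRing 𝕜]
    [AddCommGroup E] [Module 𝕜 E] {C : Set (𝕜 × E)} (hC : Convex 𝕜 C) {x₁ x₂ x : 𝕜} {y : E}
    (h₁ : (x₁, y) ∈ C) (h₂ : (x₂, y) ∈ C) (hx₁ : x₁ ≤ x) (hx₂ : x ≤ x₂) : (x, y) ∈ C := by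
  have hrow : Convex 𝕜 {t : 𝕜 | (t, y) ∈ C} := fun a ha b hb s t hs ht hst ↦ by
    simpa [← add_smul, hst] using hC ha hb hs ht hst
  exact (convex_iff_ordConnected.mp hrow).out h₁ h₂ ⟨hx₁, hx₂⟩

def halfPlane (a b c : ℤ) : Set (ℝ × ℝ) := {q | a * q.1 + b * q.2 ≤ c}

def openHalfPlane (a b c : ℤ) : Set (ℝ × ℝ) := {q | a * q.1 + b * q.2 < c}

theorem halfPlane_eq_setOf_le (a b c : ℤ) :
    halfPlane a b c = {q | ((a : ℝ) • ContinuousLinearMap.fst ℝ ℝ ℝ +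
      (b : ℝ) • ContinuousLinearMap.snd ℝ ℝ ℝ) q ≤ c} :=
  rfl

theorem convex_halfPlane (a b c : ℤ) : Convex ℝ (halfPlane a b c) := by
  rw [halfPlane_eq_setOf_le]
  exact convex_halfSpace_le (LinearMap.isLinear _) _

theorem interior_halfPlane {a b : ℤ} (hab : a ≠ 0 ∨ b ≠ 0) (c : ℤ) :
    interior (halfPlane a b c) = openHalfPlane a b c := by
  rw [halfPlane_eq_setOf_le, ContinuousLinearMap.interior_setOf_le]
  · rfl
  intro h
  rcases hab with ha | hb
  · exact ha (by simpa using congr($h (1, 0)))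
  · exact hb (by simpa using congr($h (0, 1)))

@[simp]
theorem latticeEmbed_mem_halfPlane {a b c : ℤ} {p : ℤ × ℤ} :
    latticeEmbed p ∈ halfPlane a b c ↔ a * p.1 + b * p.2 ≤ c := by
  simp only [halfPlane, latticeEmbed, mem_ofPred_eq]
  norm_cast

@[simp]
theorem latticeEmbed_mem_openHalfPlane {a b c : ℤ} {p : ℤ × ℤ} :
    latticeEmbed p ∈ openHalfPlane a b c ↔ a * p.1 + b * p.2 < c := by
  simp only [openHalfPlane, latticeEmbed, mem_ofPred_eq]
  norm_cast

def truncatedTriangle (m N h : ℤ) : Finset (ℤ × ℤ) := {(0, 1), (0, h), (m, 0), (N, 0)}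

def truncatedTriangleRegion (m N h : ℤ) : Set (ℝ × ℝ) :=
  halfPlane (-1) 0 0 ∩ halfPlane 0 (-1) 0 ∩ halfPlane (-1) (-m) (-m) ∩ halfPlane h N (h * N)

def truncatedTriangleOpenRegion (m N h : ℤ) : Set (ℝ × ℝ) :=
  openHalfPlane (-1) 0 0 ∩ openHalfPlane 0 (-1) 0 ∩ openHalfPlane (-1) (-m) (-m) ∩
    openHalfPlane h N (h * N)

theorem mem_truncatedTriangleRegion {m N h : ℤ} {q : ℝ × ℝ} :
    q ∈ truncatedTriangleRegion m N h ↔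
      0 ≤ q.1 ∧ 0 ≤ q.2 ∧ m ≤ q.1 + m * q.2 ∧ h * q.1 + N * q.2 ≤ h * N := by
  simp only [truncatedTriangleRegion, halfPlane, mem_inter_iff, mem_ofPred_eq]
  push_cast
  constructor
  · rintro ⟨⟨⟨h₁, h₂⟩, h₃⟩, h₄⟩
    exact ⟨by linarith, by linarith, by linarith, h₄⟩
  · rintro ⟨h₁, h₂, h₃, h₄⟩
    exact ⟨⟨⟨by linarith, by linarith⟩, by linarith⟩, h₄⟩

variable {m N h : ℤ}

theorem convexHull_truncatedTriangle_subset (hm : 0 ≤ m) (hmN : m ≤ N) (hh : 0 < h) :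
    convexHull ℝ (latticeEmbed '' (truncatedTriangle m N h : Set (ℤ × ℤ))) ⊆
      truncatedTriangleRegion m N h := by
  refine convexHull_min ?_ <| (((convex_halfPlane _ _ _).inter (convex_halfPlane _ _ _)).inter
    (convex_halfPlane _ _ _)).inter (convex_halfPlane _ _ _)
  rintro _ ⟨p, hp, rfl⟩
  simp only [truncatedTriangle, Finset.coe_insert, Finset.coe_singleton, mem_insert_iff,
    mem_singleton_iff] at hp
  simp only [truncatedTriangleRegion, mem_inter_iff, latticeEmbed_mem_halfPlane]
  rcases hp with rfl | rfl | rfl | rfl <;> refine ⟨⟨⟨?_, ?_⟩, ?_⟩, ?_⟩ <;> dsimp only <;> nlinarith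

theorem truncatedTriangleRegion_subset_convexHull (hN : 0 < N) (hh : 0 < h) :
    truncatedTriangleRegion m N h ⊆
      convexHull ℝ (latticeEmbed '' (truncatedTriangle m N h : Set (ℤ × ℤ))) := by
  rintro ⟨x, y⟩ hq
  obtain ⟨hx, hy, hleft, hright⟩ := mem_truncatedTriangleRegion.mp hq
  have hN' : (0 : ℝ) < N := by exact_mod_cast hN
  have hh' : (0 : ℝ) < h := by exact_mod_cast hh
  set C := convexHull ℝ (latticeEmbed '' (truncatedTriangle m N h : Set (ℤ × ℤ)))
  have hC : Convex ℝ C := convex_convexHull ℝ _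
  have hvert : ∀ p ∈ truncatedTriangle m N h, latticeEmbed p ∈ C :=
    fun p hp ↦ subset_convexHull ℝ _ ⟨p, hp, rfl⟩
  have h01 : ((0 : ℝ), (1 : ℝ)) ∈ C := by
    simpa [latticeEmbed] using hvert (0, 1) (by simp [truncatedTriangle])
  have h0h : ((0 : ℝ), (h : ℝ)) ∈ C := by
    simpa [latticeEmbed] using hvert (0, h) (by simp [truncatedTriangle])
  have hm0 : ((m : ℝ), (0 : ℝ)) ∈ C := by
    simpa [latticeEmbed] using hvert (m, 0) (by simp [truncatedTriangle])
  have hN0 : ((N : ℝ), (0 : ℝ)) ∈ C := by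
    simpa [latticeEmbed] using hvert (N, 0) (by simp [truncatedTriangle])
  -- `(x, y)` lies between the points of height `y` on the left and on the right edge.
  have hyh : y ≤ h := by nlinarith
  have hR : (N * (h - y) / h, y) ∈ C := by
    convert hC.add_smul_sub_mem hN0 h0h (t := y / h)
      ⟨by positivity, by rwa [div_le_one hh']⟩ using 1
    ext <;> simp only [Prod.mk_sub_mk, Prod.smul_mk, Prod.mk_add_mk, smul_eq_mul] <;>
      field_simp <;> ring
  have hxR : x ≤ N * (h - y) / h := by rw [le_div_iff₀ hh']; linarith
  rcases le_total y 1 with hy1 | hy1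
  · have hL : (m * (1 - y), y) ∈ C := by
      convert hC.add_smul_sub_mem hm0 h01 (t := y) ⟨hy, hy1⟩ using 1
      ext <;> simp only [Prod.mk_sub_mk, Prod.smul_mk, Prod.mk_add_mk, smul_eq_mul] <;> ring
    exact hC.mk_mem_of_le_of_le hL hR (by linarith) hxR
  · have hL : ((0 : ℝ), y) ∈ C := by
      rcases hy1.eq_or_lt with rfl | hy1
      · exact h01
      have hh1 : (0 : ℝ) < h - 1 := by linarith
      convert hC.add_smul_sub_mem h01 h0h (t := (y - 1) / (h - 1))
        ⟨by apply div_nonneg <;> linarith, by rw [div_le_one hh1]; linarith⟩ using 1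
      ext <;> simp only [Prod.mk_sub_mk, Prod.smul_mk, Prod.mk_add_mk, smul_eq_mul] <;>
        field_simp <;> ring
    exact hC.mk_mem_of_le_of_le hL hR hx hxR

theorem convexHull_truncatedTriangle (hm : 0 ≤ m) (hmN : m ≤ N) (hN : 0 < N) (hh : 0 < h) :
    convexHull ℝ (latticeEmbed '' (truncatedTriangle m N h : Set (ℤ × ℤ))) =
      truncatedTriangleRegion m N h :=
  (convexHull_truncatedTriangle_subset hm hmN hh).antisymm
    (truncatedTriangleRegion_subset_convexHull hN hh)

theorem interior_truncatedTriangleRegion (hN : 0 < N) :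
    interior (truncatedTriangleRegion m N h) = truncatedTriangleOpenRegion m N h := by
  simp only [truncatedTriangleRegion, truncatedTriangleOpenRegion, interior_inter]
  rw [interior_halfPlane, interior_halfPlane, interior_halfPlane, interior_halfPlane] <;> omega

def interiorLatticePoints (S : Finset (ℤ × ℤ)) : Set (ℤ × ℤ) :=
  {p | latticeEmbed p ∈ interior (convexHull ℝ (latticeEmbed '' (S : Set (ℤ × ℤ))))}

def boundaryLatticePoints (S : Finset (ℤ × ℤ)) : Set (ℤ × ℤ) :=
  {p | latticeEmbed p ∈ frontier (convexHull ℝ (latticeEmbed '' (S : Set (ℤ × ℤ))))}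

theorem interiorLatticePoints_truncatedTriangle (hm : 0 ≤ m) (hmN : m ≤ N) (hN : 0 < N)
    (hh : 0 < h) :
    interiorLatticePoints (truncatedTriangle m N h) =
      {p | 0 < p.1 ∧ 0 < p.2 ∧ m < p.1 + m * p.2 ∧ h * p.1 + N * p.2 < h * N} := by
  ext p
  rw [interiorLatticePoints, mem_ofPred_eq, convexHull_truncatedTriangle hm hmN hN hh,
    interior_truncatedTriangleRegion hN]
  simp only [truncatedTriangleOpenRegion, mem_inter_iff, latticeEmbed_mem_openHalfPlane,
    mem_ofPred_eq, neg_mul]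
  omega

theorem boundaryLatticePoints_truncatedTriangle (hm : 0 ≤ m) (hmN : m ≤ N) (hN : 0 < N)
    (hh : 0 < h) :
    boundaryLatticePoints (truncatedTriangle m N h) =
      {p | (0 ≤ p.1 ∧ 0 ≤ p.2 ∧ m ≤ p.1 + m * p.2 ∧ h * p.1 + N * p.2 ≤ h * N) ∧
        ¬ (0 < p.1 ∧ 0 < p.2 ∧ m < p.1 + m * p.2 ∧ h * p.1 + N * p.2 < h * N)} := by
  have hclosed :
      IsClosed (convexHull ℝ (latticeEmbed '' (truncatedTriangle m N h : Set (ℤ × ℤ)))) :=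
    ((Finset.finite_toSet _).image _).isCompact_convexHull (𝕜 := ℝ) |>.isClosed
  ext p
  rw [boundaryLatticePoints, mem_ofPred_eq, hclosed.frontier_eq,
    convexHull_truncatedTriangle hm hmN hN hh, interior_truncatedTriangleRegion hN]
  simp only [truncatedTriangleRegion, truncatedTriangleOpenRegion, mem_sdiff, mem_inter_iff,
    latticeEmbed_mem_halfPlane, latticeEmbed_mem_openHalfPlane, mem_ofPred_eq, neg_mul]
  omega

noncomputable def latticeRow (a b y : ℤ) : Finset (ℤ × ℤ) := (Finset.Icc a b).map (.sectL ℤ y)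

@[simp]
theorem mem_latticeRow {a b y : ℤ} {p : ℤ × ℤ} :
    p ∈ latticeRow a b y ↔ a ≤ p.1 ∧ p.1 ≤ b ∧ p.2 = y := by
  obtain ⟨x, y'⟩ := p
  simp [latticeRow, and_assoc, eq_comm]

theorem card_latticeRow (a b y : ℤ) : (latticeRow a b y).card = (b + 1 - a).toNat := by
  rw [latticeRow, Finset.card_map, Int.card_Icc]

theorem interiorLatticePoints_truncatedTriangle_zero_one {n : ℤ} (hn : 0 < n) :
    interiorLatticePoints (truncatedTriangle 0 n 1) = ∅ := by
  rw [interiorLatticePoints_truncatedTriangle le_rfl hn.le hn one_pos]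
  ext ⟨x, y⟩
  simp only [mem_ofPred_eq, mem_empty_iff_false, iff_false]
  rintro ⟨hx, hy, -, hlt⟩
  nlinarith

theorem boundaryLatticePoints_truncatedTriangle_zero_one {n : ℤ} (hn : 0 < n) :
    boundaryLatticePoints (truncatedTriangle 0 n 1) = ↑(insert (0, 1) (latticeRow 0 n 0)) := by
  rw [boundaryLatticePoints_truncatedTriangle le_rfl hn.le hn one_pos]
  ext ⟨x, y⟩
  simp only [mem_ofPred_eq, Finset.coe_insert, mem_insert_iff, Prod.mk.injEq, Finset.mem_coe,
    mem_latticeRow]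
  constructor
  · rintro ⟨⟨hx, hy, -, hle⟩, -⟩
    have : y ≤ 1 := by nlinarith
    interval_cases y <;> omega
  · rintro (⟨rfl, rfl⟩ | ⟨hx, hxn, rfl⟩) <;> omega

theorem interiorLatticePoints_truncatedTriangle_two {m N n : ℤ} (hm : 0 ≤ m) (hmN : m ≤ N)
    (hn : 0 ≤ n) (hnN : 2 * n + 1 ≤ N) (hNn : N ≤ 2 * n + 2) :
    interiorLatticePoints (truncatedTriangle m N 2) = ↑(latticeRow 1 n 1) := by
  rw [interiorLatticePoints_truncatedTriangle hm hmN (by omega) two_pos]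
  ext ⟨x, y⟩
  simp only [mem_ofPred_eq, Finset.mem_coe, mem_latticeRow]
  constructor
  · rintro ⟨hx, hy, -, hright⟩
    have : y < 2 := by nlinarith
    obtain rfl : y = 1 := by omega
    omega
  · rintro ⟨hx, hxn, rfl⟩
    omega

theorem boundaryLatticePoints_truncatedTriangle_even {m n : ℤ} (hm : 0 ≤ m) (hmN : m ≤ 2 * n + 2)
    (hn : 0 ≤ n) :
    boundaryLatticePoints (truncatedTriangle m (2 * n + 2) 2) =
      ↑(insert (n + 1, 1) (insert (0, 1) (insert (0, 2) (latticeRow m (2 * n + 2) 0)))) := by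
  rw [boundaryLatticePoints_truncatedTriangle hm hmN (by omega) two_pos]
  ext ⟨x, y⟩
  simp only [mem_ofPred_eq, Finset.coe_insert, mem_insert_iff, Prod.mk.injEq, Finset.mem_coe,
    mem_latticeRow]
  constructor
  · rintro ⟨⟨hx, hy, hleft, hle⟩, hstrict⟩
    have : y ≤ 2 := by nlinarith
    interval_cases y <;> omega
  · rintro (⟨rfl, rfl⟩ | ⟨rfl, rfl⟩ | ⟨rfl, rfl⟩ | ⟨hx, hxn, rfl⟩) <;> omega

theorem boundaryLatticePoints_truncatedTriangle_odd_self {n : ℤ} (hn : 0 ≤ n) :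
    boundaryLatticePoints (truncatedTriangle (2 * n + 1) (2 * n + 1) 2) =
      ↑({(0, 1), (0, 2), (2 * n + 1, 0)} : Finset (ℤ × ℤ)) := by
  rw [boundaryLatticePoints_truncatedTriangle (by omega) le_rfl (by omega) two_pos]
  ext ⟨x, y⟩
  simp only [mem_ofPred_eq, Finset.coe_insert, Finset.coe_singleton, mem_insert_iff,
    mem_singleton_iff, Prod.mk.injEq]
  constructor
  · rintro ⟨⟨hx, hy, hleft, hle⟩, hstrict⟩
    have : y ≤ 2 := by nlinarith
    interval_cases y <;> omega
  · rintro (⟨rfl, rfl⟩ | ⟨rfl, rfl⟩ | ⟨rfl, rfl⟩) <;> omega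

theorem interiorLatticePoints_truncatedTriangle_zero_three_three :
    interiorLatticePoints (truncatedTriangle 0 3 3) = {(1, 1)} := by
  rw [interiorLatticePoints_truncatedTriangle le_rfl (by norm_num) (by norm_num) (by norm_num)]
  ext ⟨x, y⟩
  simp only [mem_ofPred_eq, mem_singleton_iff, Prod.mk.injEq]
  omega

theorem boundaryLatticePoints_truncatedTriangle_zero_three_three :
    boundaryLatticePoints (truncatedTriangle 0 3 3) =
      ↑({(0, 0), (1, 0), (2, 0), (3, 0), (0, 1), (2, 1), (0, 2), (1, 2), (0, 3)} :
        Finset (ℤ × ℤ)) := by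
  rw [boundaryLatticePoints_truncatedTriangle le_rfl (by norm_num) (by norm_num) (by norm_num)]
  ext ⟨x, y⟩
  simp only [mem_ofPred_eq, Finset.coe_insert, Finset.coe_singleton, mem_insert_iff,
    mem_singleton_iff, Prod.mk.injEq]
  omega

def IsRealizable (g k : ℕ) : Prop :=
  ∃ S : Finset (ℤ × ℤ), (interior (convexHull ℝ (latticeEmbed '' (S : Set (ℤ × ℤ))))).Nonempty ∧
    (interiorLatticePoints S).ncard = g ∧ (boundaryLatticePoints S).ncard = k

theorem isRealizable_zero {k : ℕ} (hk : 3 ≤ k) : IsRealizable 0 k := by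
  set n : ℤ := k - 2
  have hn : 0 < n := by omega
  refine ⟨truncatedTriangle 0 n 1, ⟨(1 / 4, 1 / 4), ?_⟩, ?_, ?_⟩
  · have hn' : (1 : ℝ) ≤ n := by exact_mod_cast hn
    rw [convexHull_truncatedTriangle le_rfl hn.le hn one_pos, interior_truncatedTriangleRegion hn]
    simp only [truncatedTriangleOpenRegion, openHalfPlane, mem_inter_iff, mem_ofPred_eq]
    push_cast
    refine ⟨⟨⟨by norm_num, by norm_num⟩, by norm_num⟩, by linarith⟩
  · rw [interiorLatticePoints_truncatedTriangle_zero_one hn, ncard_empty]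
  · rw [boundaryLatticePoints_truncatedTriangle_zero_one hn, ncard_coe_finset,
      Finset.card_insert_of_notMem (by simp), card_latticeRow]
    omega

theorem isRealizable_three {g : ℕ} (hg : 1 ≤ g) : IsRealizable g 3 := by
  have hint := interiorLatticePoints_truncatedTriangle_two (m := 2 * g + 1) (N := 2 * g + 1)
    (n := g) (by omega) le_rfl (by omega) le_rfl (by omega)
  refine ⟨truncatedTriangle (2 * g + 1) (2 * g + 1) 2, ⟨latticeEmbed (1, 1), ?_⟩, ?_, ?_⟩
  · change (1, 1) ∈ interiorLatticePoints _
    rw [hint, Finset.mem_coe, mem_latticeRow]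
    omega
  · rw [hint, ncard_coe_finset, card_latticeRow]
    omega
  · rw [boundaryLatticePoints_truncatedTriangle_odd_self (by omega), ncard_coe_finset,
      Finset.card_insert_of_notMem (by simp), Finset.card_pair (by simp)]

theorem isRealizable_of_four_le {g k : ℕ} (hg : 1 ≤ g) (hk : 4 ≤ k) (hkg : k ≤ 2 * g + 6) :
    IsRealizable g k := by
  have hint := interiorLatticePoints_truncatedTriangle_two (m := 2 * g + 6 - k)
    (N := 2 * g + 2) (n := g) (by omega) (by omega) (by omega) (by omega) le_rfl
  refine ⟨truncatedTriangle (2 * g + 6 - k) (2 * g + 2) 2, ⟨latticeEmbed (1, 1), ?_⟩, ?_, ?_⟩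
  · change (1, 1) ∈ interiorLatticePoints _
    rw [hint, Finset.mem_coe, mem_latticeRow]
    omega
  · rw [hint, ncard_coe_finset, card_latticeRow]
    omega
  · rw [boundaryLatticePoints_truncatedTriangle_even (by omega) (by omega) (by omega),
      ncard_coe_finset, Finset.card_insert_of_notMem
        (by simp only [Finset.mem_insert, Prod.mk.injEq, mem_latticeRow]; omega),
      Finset.card_insert_of_notMem (by simp), Finset.card_insert_of_notMem (by simp),
      card_latticeRow]
    omega

theorem isRealizable_one_nine : IsRealizable 1 9 := by
  refine ⟨truncatedTriangle 0 3 3, ⟨latticeEmbed (1, 1), ?_⟩, ?_, ?_⟩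
  · change (1, 1) ∈ interiorLatticePoints _
    rw [interiorLatticePoints_truncatedTriangle_zero_three_three, mem_singleton_iff]
  · rw [interiorLatticePoints_truncatedTriangle_zero_three_three, ncard_singleton]
  · rw [boundaryLatticePoints_truncatedTriangle_zero_three_three, ncard_coe_finset]
    rfl

/-- Scott's realization theorem: for every pair `(g, k)` with
`k ≥ 3`, `k ≤ 2g + 6` when `g ≥ 2`, and `k ≤ 9` when `g = 1`, there is a convex
lattice polygon (the convex hull of finitely many lattice points, with nonempty
interior) having exactly `g` interior lattice points and exactly `k` boundary
lattice points. -/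
theorem stmt9 (g k : ℕ) (hk : 3 ≤ k)
    (hg2 : 2 ≤ g → k ≤ 2 * g + 6) (hg1 : g = 1 → k ≤ 9) :
    ∃ S : Finset (ℤ × ℤ),
      (interior (convexHull ℝ (latticeEmbed '' (S : Set (ℤ × ℤ))))).Nonempty ∧
      {p : ℤ × ℤ | latticeEmbed p ∈
        interior (convexHull ℝ (latticeEmbed '' (S : Set (ℤ × ℤ))))}.ncard = g ∧
      {p : ℤ × ℤ | latticeEmbed p ∈
        frontier (convexHull ℝ (latticeEmbed '' (S : Set (ℤ × ℤ))))}.ncard = k := by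
  change IsRealizable g k
  rcases Nat.eq_zero_or_pos g with rfl | hg
  · exact isRealizable_zero hk
  rcases hk.eq_or_lt with rfl | hk
  · exact isRealizable_three hg
  by_cases hkg : k ≤ 2 * g + 6
  · exact isRealizable_of_four_le hg hk hkg
  obtain rfl : g = 1 := by omega
  obtain rfl : k = 9 := by have := hg1 rfl; omega
  exact isRealizable_one_nine
end

section
/- Let T = R L⁻¹ where L is invertible lower triangular and R is invertible upper triangular (n×n over ℂ), and suppose T is lower anti-triangular (T_{ij} = 0 for i+j < n+1). Similarly let T' = (R')⁻¹ L' with R' invertible lower triangular, L' invertible upper triangular, and T' upper anti-triangular. Then T T' is lower triangular with nonzero diagonal entries, and its diagonal entries (with multiplicity) are the eigenvalues of T T'. -/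
open Matrix Polynomial Finset

/-- Anti-diagonal entries of an invertible "lower anti-triangular" matrix are nonzero. -/
lemma antidiag_ne_zero_of_lowerAnti {n : ℕ} (T : Matrix (Fin n) (Fin n) ℂ)
    (hTu : IsUnit T.det)
    (hTanti : ∀ i j : Fin n, (i : ℕ) + (j : ℕ) < n - 1 → T i j = 0)
    (i : Fin n) : T i (Fin.rev i) ≠ 0 := by
  have hM : (T.submatrix id Fin.revPerm).det = Equiv.Perm.sign (Fin.revPerm (n := n)) * T.det :=
    Matrix.det_permute' _ _
  have hMu : IsUnit (T.submatrix id Fin.revPerm).det := by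
    rw [hM]; exact (((Equiv.Perm.sign (Fin.revPerm (n:=n))).isUnit.map (Int.castRingHom ℂ)).mul hTu)
  have hlow : (T.submatrix id (Fin.revPerm (n := n))).BlockTriangular OrderDual.toDual := by
    intro a b hab
    simp only [Matrix.submatrix_apply, id_eq]
    apply hTanti
    have hab' : (a : ℕ) < b := hab
    have := b.isLt
    simp only [Fin.revPerm_apply, Fin.val_rev]
    omega
  rw [Matrix.det_of_lowerTriangular _ hlow] at hMu
  have := hMu.ne_zero
  rw [Finset.prod_ne_zero_iff] at this
  simpa using this i (mem_univ i)

lemma antidiag_ne_zero_of_upperAnti {n : ℕ} (T' : Matrix (Fin n) (Fin n) ℂ)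
    (hT'u : IsUnit T'.det)
    (hT'anti : ∀ i j : Fin n, (i : ℕ) + (j : ℕ) > n - 1 → T' i j = 0)
    (i : Fin n) : T' i (Fin.rev i) ≠ 0 := by
  have hM : (T'.submatrix id Fin.revPerm).det = Equiv.Perm.sign (Fin.revPerm (n := n)) * T'.det :=
    Matrix.det_permute' _ _
  have hMu : IsUnit (T'.submatrix id Fin.revPerm).det := by
    rw [hM]; exact (((Equiv.Perm.sign (Fin.revPerm (n:=n))).isUnit.map (Int.castRingHom ℂ)).mul hT'u)
  have hup : (T'.submatrix id (Fin.revPerm (n := n))).BlockTriangular id := by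
    intro a b hab
    simp only [Matrix.submatrix_apply, id_eq]
    apply hT'anti
    have hab' : (b : ℕ) < a := hab
    have := a.isLt
    have := b.isLt
    simp only [Fin.revPerm_apply, Fin.val_rev]
    omega
  rw [Matrix.det_of_upperTriangular hup] at hMu
  have := hMu.ne_zero
  rw [Finset.prod_ne_zero_iff] at this
  simpa using this i (mem_univ i)


/-- with `T = R * L⁻¹` lower anti-triangular (where `L` is invertible
lower triangular and `R` invertible upper triangular) and `T' = R'⁻¹ * L'` upper
anti-triangular (where `R'` is invertible lower triangular and `L'` invertible upper
triangular), the product `T * T'` is lower triangular with nonzero diagonal entries,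
and its eigenvalue multiset is the multiset of its diagonal entries.
(Anti-triangularity in 1-based indices `i + j < n + 1` resp. `i + j > n + 1`
translates to `i + j < n - 1` resp. `i + j > n - 1` in the 0-based indices used
here.) -/
theorem stmt19 {n : ℕ} (L R R' L' T T' : Matrix (Fin n) (Fin n) ℂ)
    (hL : ∀ i j : Fin n, i < j → L i j = 0) (hLu : IsUnit L.det)
    (hR : ∀ i j : Fin n, j < i → R i j = 0) (hRu : IsUnit R.det)
    (hR' : ∀ i j : Fin n, i < j → R' i j = 0) (hR'u : IsUnit R'.det)
    (hL' : ∀ i j : Fin n, j < i → L' i j = 0) (hL'u : IsUnit L'.det)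
    (hT : T = R * L⁻¹) (hT' : T' = R'⁻¹ * L')
    (hTanti : ∀ i j : Fin n, (i : ℕ) + (j : ℕ) < n - 1 → T i j = 0)
    (hT'anti : ∀ i j : Fin n, (i : ℕ) + (j : ℕ) > n - 1 → T' i j = 0) :
    (∀ i j : Fin n, i < j → (T * T') i j = 0) ∧
    (∀ i : Fin n, (T * T') i i ≠ 0) ∧
    (T * T').charpoly.roots = Multiset.map (fun i => (T * T') i i) Finset.univ.val := by
  have hTu : IsUnit T.det := by
    rw [hT, Matrix.det_mul]
    exact hRu.mul (L.isUnit_nonsing_inv_det hLu)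
  have hT'u : IsUnit T'.det := by
    rw [hT', Matrix.det_mul]
    exact (R'.isUnit_nonsing_inv_det hR'u).mul hL'u
  have hTd := antidiag_ne_zero_of_lowerAnti T hTu hTanti
  have hT'd := antidiag_ne_zero_of_upperAnti T' hT'u hT'anti
  -- lower triangularity of the product
  have hlow : ∀ i j : Fin n, i < j → (T * T') i j = 0 := by
    intro i j hij
    rw [Matrix.mul_apply]
    apply Finset.sum_eq_zero
    intro k _
    rcases lt_or_ge ((i : ℕ) + k) (n - 1) with h | h
    · rw [hTanti i k h, zero_mul]
    · rw [hT'anti k j (by have := j.isLt; have hij' : (i:ℕ) < j := hij; omega), mul_zero]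
  -- diagonal entries
  have hdiag : ∀ i : Fin n, (T * T') i i = T i (Fin.rev i) * T' (Fin.rev i) i := by
    intro i
    rw [Matrix.mul_apply]
    apply Finset.sum_eq_single (Fin.rev i)
    · intro k _ hk
      rcases lt_or_ge ((i : ℕ) + k) (n - 1) with h | h
      · rw [hTanti i k h, zero_mul]
      · refine (mul_eq_zero.2 (Or.inr (hT'anti k i ?_)))
        have := k.isLt
        have := i.isLt
        have hne : (k : ℕ) ≠ n - 1 - i := by
          intro hc; apply hk; apply Fin.ext; rw [Fin.val_rev]; omega
        omega
    · intro h; exact absurd (mem_univ _) h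
  have hdne : ∀ i : Fin n, (T * T') i i ≠ 0 := by
    intro i
    rw [hdiag i]
    have h2 : T' (Fin.rev i) i ≠ 0 := by
      have := hT'd (Fin.rev i)
      rwa [Fin.rev_rev] at this
    exact mul_ne_zero (hTd i) h2
  refine ⟨hlow, hdne, ?_⟩
  -- charpoly of lower triangular matrix
  set D := T * T' with hD
  have hcharlow : (Matrix.charmatrix D).BlockTriangular OrderDual.toDual := by
    intro a b hab
    have hab' : a < b := hab
    rw [Matrix.charmatrix_apply_ne _ _ _ (ne_of_lt hab'), hlow a b hab', map_zero, neg_zero]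
  have hchar : D.charpoly = ∏ i : Fin n, (X - C (D i i)) := by
    rw [Matrix.charpoly, Matrix.det_of_lowerTriangular _ hcharlow]
    exact Finset.prod_congr rfl fun i _ => Matrix.charmatrix_apply_eq _ _
  rw [hchar]
  have : (∏ i : Fin n, (X - C (D i i))) =
      ((Finset.univ.val.map fun i => D i i).map fun a => X - C a).prod := by
    rw [Multiset.map_map]
    rfl
  rw [this, Polynomial.roots_multiset_prod_X_sub_C]
end
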